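/- Let K ≥ 1, let λ ∈ ℝ^K satisfy λ_j ≥ 1 for all j, and let α ∈ ℝ^K satisfy α_j ≥ λ_j for all j. Then for every index i, |(α_i − λ_i)·ψ′(α_i) − (S(α) − ‖λ‖₁)·ψ′(S(α))| < 2 + 1/(min_j λ_j) + 1/‖λ‖₁. -/

import Mathlib

/-- The digamma function `ψ`, i.e. the derivative of `x ↦ log Γ(x)`. -/
noncomputable def digamma (x : ℝ) : ℝ := deriv (fun y : ℝ => Real.log (Real.Gamma y)) x

/-- The trigamma function `ψ′`, i.e. the derivative of the digamma function. -/
noncomputable def trigamma (x : ℝ) : ℝ := deriv digamma x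

/-!
Differentiating the Euler limit formula `log Γ(x) = lim (x log n + log n! - ∑_{j ≤ n} log (x + j))`
termwise (the derivatives converge locally uniformly on `(0, ∞)`) gives
`ψ(x) = -γ + ∑_{j ≥ 0} (1/(j+1) - 1/(x+j))`, and differentiating this series once more gives
`ψ′(x) = ∑_{j ≥ 0} 1/(x+j)²`. Since `1/(x+j+1)² ≤ 1/(x+j) - 1/(x+j+1)`, the tail telescopes to at
most `1/x`, so `x ψ′(x) ≤ 1 + 1/x`. Hence for `0 ≤ l ≤ x` the quantity `(x - l) ψ′(x)` lies in
`[0, 1 + 1/x]`; applied to `(α_i, λ_i)` and `(S(α), ‖λ‖₁)`, both terms of the difference lie in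
`[0, 1 + 1/min λ]` and `[0, 1 + 1/‖λ‖₁]`.
-/

open Filter Topology Real Set Finset

noncomputable def digammaSeq (n : ℕ) (x : ℝ) : ℝ :=
  log n - ∑ j ∈ range (n + 1), 1 / (x + j)

noncomputable def digammaSeries (x : ℝ) : ℝ :=
  -eulerMascheroniConstant + ∑' j : ℕ, (1 / (j + 1) - 1 / (x + j))

lemma summable_one_div_add_sq (a : ℝ) : Summable fun j : ℕ => 1 / (a + j) ^ 2 :=
  ((summable_one_div_nat_add_rpow a 2).2 one_lt_two).congr fun j => by
    rw [rpow_two, sq_abs, add_comm]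

lemma abs_one_div_succ_sub_one_div_add_le {x : ℝ} (hx : 0 ≤ x) {j : ℕ} (hj : 1 ≤ j) :
    |1 / ((j : ℝ) + 1) - 1 / (x + j)| ≤ (x + 1) / (j : ℝ) ^ 2 := by
  have hj : (1 : ℝ) ≤ j := by exact_mod_cast hj
  rw [div_sub_div _ _ (by positivity) (by positivity), abs_div,
    abs_of_pos (by positivity : 0 < ((j : ℝ) + 1) * (x + j))]
  refine div_le_div₀ (by positivity) ?_ (by positivity) (by nlinarith)
  rw [abs_le]
  constructor <;> nlinarith

lemma hasDerivAt_logGammaSeq (n : ℕ) {x : ℝ} (hx : 0 < x) :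
    HasDerivAt (fun y => BohrMollerup.logGammaSeq y n) (digammaSeq n x) x := by
  have hlog : ∀ j ∈ range (n + 1), HasDerivAt (fun y => log (y + j)) (1 / (x + j)) x :=
    fun j _ => by
      simpa [one_div] using ((hasDerivAt_id x).add_const (j : ℝ)).log (by positivity)
  simpa [digammaSeq, BohrMollerup.logGammaSeq] using
    (((hasDerivAt_id x).mul_const (log n)).add_const (log n.factorial)).fun_sub
      (HasDerivAt.fun_sum hlog)

lemma hasDerivAt_one_div_succ_sub_one_div_add (j : ℕ) {x : ℝ} (hx : 0 < x) :
    HasDerivAt (fun y => 1 / ((j : ℝ) + 1) - 1 / (y + j)) (1 / (x + j) ^ 2) x := by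
  simpa [one_div, neg_div] using
    (((hasDerivAt_id x).add_const (j : ℝ)).inv (by positivity)).const_sub (1 / ((j : ℝ) + 1))

lemma digammaSeq_eq (n : ℕ) (x : ℝ) :
    digammaSeq n x = digammaSeq n 1 + ∑ j ∈ range (n + 1), (1 / ((j : ℝ) + 1) - 1 / (x + j)) := by
  simp only [digammaSeq, sum_sub_distrib, add_comm (1 : ℝ)]
  ring

lemma tendsto_digammaSeq_one :
    Tendsto (fun n => digammaSeq n 1) atTop (𝓝 (-eulerMascheroniConstant)) := by
  have h : ∀ n : ℕ, digammaSeq n 1 = -((harmonic n : ℝ) - log n) - 1 / ((n : ℝ) + 1) := by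
    intro n
    simp only [digammaSeq, harmonic, sum_range_succ, add_comm (1 : ℝ)]
    push_cast
    simp only [one_div]
    ring
  simpa [h] using tendsto_harmonic_sub_log.neg.sub tendsto_one_div_add_atTop_nhds_zero_nat

lemma TendstoUniformlyOn.comp_add_one {α β : Type*} [UniformSpace β] {F : ℕ → α → β} {f : α → β}
    {s : Set α} (h : TendstoUniformlyOn F f atTop s) :
    TendstoUniformlyOn (fun n => F (n + 1)) f atTop s :=
  fun u hu => (tendsto_add_atTop_nat 1).eventually (h u hu)

lemma tendstoUniformlyOn_digammaSeq (b : ℝ) :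
    TendstoUniformlyOn digammaSeq digammaSeries atTop (Ioo 0 b) := by
  have hseries : TendstoUniformlyOn
      (fun N x => ∑ j ∈ range N, (1 / ((j : ℝ) + 1) - 1 / (x + j)))
      (fun x => ∑' j : ℕ, (1 / ((j : ℝ) + 1) - 1 / (x + j))) atTop (Ioo 0 b) := by
    refine tendstoUniformlyOn_tsum_nat_eventually
      ((summable_one_div_nat_pow.2 one_lt_two).const_div (b + 1)) ?_
    filter_upwards [eventually_ge_atTop 1] with j hj x hx
    refine (abs_one_div_succ_sub_one_div_add_le hx.1.le hj).trans ?_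
    gcongr
    exact hx.2.le
  refine ((tendsto_digammaSeq_one.tendstoUniformlyOn_const _).add hseries.comp_add_one).congr ?_
  filter_upwards with n x _
  exact (digammaSeq_eq n x).symm

lemma tendstoLocallyUniformlyOn_digammaSeq :
    TendstoLocallyUniformlyOn digammaSeq digammaSeries atTop (Ioi 0) :=
  fun u hu x hx => ⟨Ioo 0 (x + 1), mem_nhdsWithin_of_mem_nhds (Ioo_mem_nhds hx (lt_add_one x)),
    tendstoUniformlyOn_digammaSeq (x + 1) u hu⟩

lemma hasDerivAt_log_Gamma {x : ℝ} (hx : 0 < x) :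
    HasDerivAt (fun y => log (Gamma y)) (digammaSeries x) x :=
  hasDerivAt_of_tendstoLocallyUniformlyOn (f := fun n y => BohrMollerup.logGammaSeq y n)
    isOpen_Ioi tendstoLocallyUniformlyOn_digammaSeq
    (.of_forall fun n _ hy => hasDerivAt_logGammaSeq n hy)
    (fun _ hy => BohrMollerup.tendsto_log_gamma hy) hx

lemma digamma_eq_digammaSeries {x : ℝ} (hx : 0 < x) : digamma x = digammaSeries x :=
  (hasDerivAt_log_Gamma hx).deriv

lemma hasDerivAt_digammaSeries {x : ℝ} (hx : 0 < x) :
    HasDerivAt digammaSeries (∑' j : ℕ, 1 / (x + j) ^ 2) x := by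
  have hsummable : Summable fun j : ℕ => 1 / ((j : ℝ) + 1) - 1 / (x + j) := by
    refine .of_norm_bounded_eventually_nat
      ((summable_one_div_nat_pow.2 one_lt_two).const_div (x + 1)) ?_
    filter_upwards [eventually_ge_atTop 1] with j hj
    exact abs_one_div_succ_sub_one_div_add_le hx.le hj
  refine (hasDerivAt_tsum_of_isPreconnected (summable_one_div_add_sq (x / 2)) isOpen_Ioi
    isPreconnected_Ioi (fun j y hy => hasDerivAt_one_div_succ_sub_one_div_add j
      ((half_pos hx).trans hy)) (fun j y hy => ?_) (half_lt_self hx) hsummable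
      (half_lt_self hx)).const_add _
  have hy : x / 2 < y := hy
  rw [Real.norm_eq_abs, abs_of_nonneg (by positivity)]
  gcongr

lemma trigamma_eq_tsum {x : ℝ} (hx : 0 < x) : trigamma x = ∑' j : ℕ, 1 / (x + j) ^ 2 := by
  have h : digamma =ᶠ[𝓝 x] digammaSeries :=
    eventually_of_mem (Ioi_mem_nhds hx) fun y hy => digamma_eq_digammaSeries hy
  rw [trigamma, h.deriv_eq, (hasDerivAt_digammaSeries hx).deriv]

lemma sum_range_one_div_add_succ_sq_le {x : ℝ} (hx : 0 < x) (n : ℕ) :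
    ∑ j ∈ range n, 1 / (x + (j + 1)) ^ 2 ≤ 1 / x - 1 / (x + n) := by
  induction n with
  | zero => simp
  | succ n ih =>
    have hstep : 1 / (x + (n + 1)) ^ 2 ≤ 1 / (x + n) - 1 / (x + (n + 1)) := by
      rw [div_sub_div _ _ (by positivity) (by positivity)]
      gcongr <;> nlinarith
    rw [sum_range_succ]
    push_cast
    linarith

lemma tsum_one_div_add_sq_le {x : ℝ} (hx : 0 < x) :
    ∑' j : ℕ, 1 / (x + j) ^ 2 ≤ 1 / x ^ 2 + 1 / x := by
  rw [(summable_one_div_add_sq x).tsum_eq_zero_add]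
  have htail : ∑' j : ℕ, 1 / (x + (j + 1)) ^ 2 ≤ 1 / x :=
    Real.tsum_le_of_sum_range_le (fun _ => by positivity) fun n =>
      (sum_range_one_div_add_succ_sq_le hx n).trans (sub_le_self _ (by positivity))
  simp only [Nat.cast_zero, add_zero, Nat.cast_succ]
  exact add_le_add_right htail _

lemma trigamma_nonneg {x : ℝ} (hx : 0 < x) : 0 ≤ trigamma x := by
  rw [trigamma_eq_tsum hx]
  exact tsum_nonneg fun _ => by positivity

lemma mul_trigamma_le {x : ℝ} (hx : 0 < x) : x * trigamma x ≤ 1 + 1 / x := by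
  calc x * trigamma x ≤ x * (1 / x ^ 2 + 1 / x) := by
        rw [trigamma_eq_tsum hx]
        exact mul_le_mul_of_nonneg_left (tsum_one_div_add_sq_le hx) hx.le
    _ = 1 + 1 / x := by field_simp; ring

lemma sub_mul_trigamma_mem_Icc {l x : ℝ} (hl : 0 ≤ l) (hlx : l ≤ x) (hx : 0 < x) :
    (x - l) * trigamma x ∈ Icc 0 (1 + 1 / x) :=
  ⟨mul_nonneg (sub_nonneg.2 hlx) (trigamma_nonneg hx),
    (mul_le_mul_of_nonneg_right (sub_le_self x hl) (trigamma_nonneg hx)).trans (mul_trigamma_le hx)⟩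

theorem kl_gradient_bound_general (K : ℕ) (lam α : Fin K → ℝ)
    (hlam : ∀ j, 1 ≤ lam j) (hα : ∀ j, lam j ≤ α j) (i : Fin K) :
    |(α i - lam i) * trigamma (α i) - ((∑ k, α k) - ∑ k, lam k) * trigamma (∑ k, α k)|
      < 2 + 1 / (⨅ j, lam j) + 1 / ∑ k, lam k := by
  have : Nonempty (Fin K) := ⟨i⟩
  have hlam_pos j : 0 < lam j := one_pos.trans_le (hlam j)
  have hmin_pos : 0 < ⨅ j, lam j := one_pos.trans_le (le_ciInf hlam)
  have hmin_le : ⨅ j, lam j ≤ α i := (ciInf_le (finite_range lam).bddBelow i).trans (hα i)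
  have hsum_pos : 0 < ∑ k, lam k := sum_pos (fun j _ => hlam_pos j) ⟨i, mem_univ i⟩
  have hsum_le : ∑ k, lam k ≤ ∑ k, α k := sum_le_sum fun j _ => hα j
  obtain ⟨hfirst_nonneg, hfirst_le⟩ :=
    sub_mul_trigamma_mem_Icc (hlam_pos i).le (hα i) (hmin_pos.trans_le hmin_le)
  obtain ⟨hsecond_nonneg, hsecond_le⟩ :=
    sub_mul_trigamma_mem_Icc hsum_pos.le hsum_le (hsum_pos.trans_le hsum_le)
  have hinv_first : 1 / α i ≤ 1 / ⨅ j, lam j := one_div_le_one_div_of_le hmin_pos hmin_le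
  have hinv_second : 1 / ∑ k, α k ≤ 1 / ∑ k, lam k := one_div_le_one_div_of_le hsum_pos hsum_le
  rw [abs_sub_lt_iff]
  constructor <;> linarith [one_div_pos.2 hmin_pos, one_div_pos.2 hsum_pos]

/-- If `λ_j ≥ 1` and `α_j ≥ λ_j` for all `j`, then for every `i`,
`|(α_i − λ_i)·ψ′(α_i) − (S(α) − ‖λ‖₁)·ψ′(S(α))| < 2 + 1/(min_j λ_j) + 1/‖λ‖₁`. -/
theorem kl_gradient_bound (K : ℕ) (hK : 1 ≤ K) (lam α : Fin K → ℝ)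
    (hlam : ∀ j, 1 ≤ lam j) (hα : ∀ j, lam j ≤ α j) (i : Fin K) :
    |(α i - lam i) * trigamma (α i) - ((∑ k, α k) - ∑ k, lam k) * trigamma (∑ k, α k)|
      < 2 + 1 / (⨅ j, lam j) + 1 / ∑ k, lam k :=
  kl_gradient_bound_general K lam α hlam hα i
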